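/- arXiv:2501.08927 — 6 statements merged into one kernel-verified Lean document; each statement's English description precedes it below -/
import Mathlib

section
/- Let H be a separable Hilbert space and (X, μ) a σ-finite positive measure space such that η = inf{μ(E) : E measurable, 0 < μ(E) < ∞} > 0. Then every Bessel mapping F : X → H with Bessel bound B is norm bounded: for μ-almost every x ∈ X one has ‖F(x)‖ ≤ √(B/η). -/
/-!
Fix `f`. By Markov's inequality every superlevel set `{c ≤ ‖⟪f, F x⟫‖²}` has measure at most
`B‖f‖² / c < ∞`; if it is not null it therefore has measure at least `η`, which forces
`c ≤ B‖f‖² / η`. Hence `‖⟪f, F x⟫‖ ≤ √(B / η) ‖f‖` almost everywhere. Since `H` is separable,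
this holds a.e. simultaneously for all `f` in a countable dense set, hence by continuity for
all `f`, and `f = F x` gives the bound.
-/

open MeasureTheory ENNReal
open scoped NNReal

section MeasureLowerBound

variable {α : Type*} [MeasurableSpace α] {μ : Measure α}

theorem ae_le_of_forall_lt_measure_setOf_le_eq_zero {g : α → ℝ≥0∞} {a : ℝ≥0∞}
    (h : ∀ c, a < c → μ {x | c ≤ g x} = 0) : ∀ᵐ x ∂μ, g x ≤ a := by
  have hsup : essSup g μ ≤ a := le_of_forall_gt_imp_ge_of_dense fun c hc =>
    (essSup_eq_sInf μ g).trans_le <| sInf_le <|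
      measure_mono_null (fun x (hx : c < g x) => hx.le) (h c hc)
  filter_upwards [ENNReal.ae_le_essSup g] with x hx using hx.trans hsup

theorem ae_le_div_of_lintegral_le {g : α → ℝ≥0∞} {C η : ℝ≥0∞} (hg : AEMeasurable g μ)
    (hη : ∀ E, MeasurableSet E → 0 < μ E → μ E < ∞ → η ≤ μ E)
    (hC : ∫⁻ x, g x ∂μ ≤ C) (hC_top : C ≠ ∞) : ∀ᵐ x ∂μ, g x ≤ C / η := by
  refine ae_le_of_forall_lt_measure_setOf_le_eq_zero fun c hc => ?_
  set S := {x | c ≤ g x}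
  have hc0 : c ≠ 0 := (zero_le.trans_lt hc).ne'
  have hmarkov : c * μ S ≤ C := (mul_meas_ge_le_lintegral₀ hg c).trans hC
  have hS_top : μ S ≠ ∞ := fun h => hC_top <| top_le_iff.mp <| by
    simpa [h, ENNReal.mul_top hc0] using hmarkov
  by_contra hS0
  have hηS : η ≤ μ S := by
    rw [← measure_toMeasurable S] at hS0 hS_top ⊢
    exact hη _ (measurableSet_toMeasurable μ S) (pos_iff_ne_zero.2 hS0) hS_top.lt_top
  have : c ≤ C / η := calc
    c ≤ C / μ S := (ENNReal.le_div_iff_mul_le (.inl hS0) (.inl hS_top)).2 hmarkov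
    _ ≤ C / η := ENNReal.div_le_div_left hηS C
  exact this.not_gt hc

end MeasureLowerBound

theorem norm_le_of_dense_forall_norm_inner_le {𝕜 H : Type*} [RCLike 𝕜] [NormedAddCommGroup H]
    [InnerProductSpace 𝕜 H] {D : Set H} (hD : Dense D) {v : H} {K : ℝ} (hK : 0 ≤ K)
    (h : ∀ d ∈ D, ‖(inner 𝕜 d v : 𝕜)‖ ≤ K * ‖d‖) : ‖v‖ ≤ K := by
  have hall : ∀ g : H, ‖(inner 𝕜 g v : 𝕜)‖ ≤ K * ‖g‖ := fun g =>
    hD.induction h (isClosed_le (continuous_id.inner continuous_const).norm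
      (continuous_const.mul continuous_norm)) g
  rw [← innerSL_apply_norm 𝕜 v]
  refine ContinuousLinearMap.opNorm_le_bound _ hK fun g => ?_
  rw [innerSL_apply_apply, norm_inner_symm]
  exact hall g

theorem ae_norm_inner_le_of_lintegral_le {𝕜 X H : Type*} [RCLike 𝕜] [MeasurableSpace X]
    [NormedAddCommGroup H] [InnerProductSpace 𝕜 H] {μ : Measure X} {F : X → H} {B : ℝ}
    (hB : 0 ≤ B) {η : ℝ≥0∞} (hη0 : η ≠ 0)
    (hη : ∀ E, MeasurableSet E → 0 < μ E → μ E < ∞ → η ≤ μ E) {f : H}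
    (hmeas : Measurable fun x => (inner 𝕜 f (F x) : 𝕜))
    (hBessel : ∫⁻ x, (‖(inner 𝕜 f (F x) : 𝕜)‖₊ : ℝ≥0∞) ^ 2 ∂μ ≤ ENNReal.ofReal (B * ‖f‖ ^ 2)) :
    ∀ᵐ x ∂μ, ‖(inner 𝕜 f (F x) : 𝕜)‖ ≤ Real.sqrt (B / η.toReal) * ‖f‖ := by
  have hmeas_sq : Measurable fun x => (‖(inner 𝕜 f (F x) : 𝕜)‖₊ : ℝ≥0∞) ^ 2 :=
    hmeas.nnnorm.coe_nnreal_ennreal.pow_const 2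
  filter_upwards [ae_le_div_of_lintegral_le hmeas_sq.aemeasurable hη hBessel ofReal_ne_top]
    with x hx
  have hsq := ENNReal.toReal_mono (ENNReal.div_ne_top ofReal_ne_top hη0) hx
  rw [toReal_pow, coe_toReal, coe_nnnorm, toReal_div, toReal_ofReal (by positivity)] at hsq
  calc ‖(inner 𝕜 f (F x) : 𝕜)‖ ≤ Real.sqrt (B * ‖f‖ ^ 2 / η.toReal) := Real.le_sqrt_of_sq_le hsq
    _ = Real.sqrt (B / η.toReal) * ‖f‖ := by
      rw [mul_div_right_comm, Real.sqrt_mul' _ (sq_nonneg _), Real.sqrt_sq (norm_nonneg f)]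

theorem stmt_0_general {𝕜 X H : Type*} [RCLike 𝕜] [MeasurableSpace X]
    [NormedAddCommGroup H] [InnerProductSpace 𝕜 H]
    [TopologicalSpace.SeparableSpace H]
    (μ : Measure X)
    (F : X → H) (B : ℝ) (hB : 0 < B)
    (hmeas : ∀ f : H, Measurable fun x => (inner 𝕜 f (F x) : 𝕜))
    (hBessel : ∀ f : H,
      ∫⁻ x, (‖(inner 𝕜 f (F x) : 𝕜)‖₊ : ℝ≥0∞) ^ 2 ∂μ ≤ ENNReal.ofReal (B * ‖f‖ ^ 2))
    (η : ℝ≥0∞)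
    (hη : η = sInf {m : ℝ≥0∞ | ∃ E : Set X, MeasurableSet E ∧ μ E = m ∧ 0 < m ∧ m < ⊤})
    (hηpos : 0 < η) :
    ∀ᵐ x ∂μ, ‖F x‖ ≤ Real.sqrt (B / η.toReal) := by
  have hη_le : ∀ E, MeasurableSet E → 0 < μ E → μ E < ∞ → η ≤ μ E :=
    fun E hE hpos hfin => hη ▸ sInf_le ⟨E, hE, rfl, hpos, hfin⟩
  obtain ⟨D, hD_count, hD_dense⟩ := TopologicalSpace.exists_countable_dense H
  have hD : ∀ᵐ x ∂μ, ∀ d ∈ D, ‖(inner 𝕜 d (F x) : 𝕜)‖ ≤ Real.sqrt (B / η.toReal) * ‖d‖ :=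
    (ae_ball_iff hD_count).2 fun d _ =>
      ae_norm_inner_le_of_lintegral_le hB.le hηpos.ne' hη_le (hmeas d) (hBessel d)
  filter_upwards [hD] with x hx
  exact norm_le_of_dense_forall_norm_inner_le hD_dense (Real.sqrt_nonneg _) hx

/-- Let `H` be a separable Hilbert space and `(X, μ)` a σ-finite positive
measure space such that `η = inf {μ E : E measurable, 0 < μ E < ∞} > 0`. Then every Bessel
mapping `F : X → H` with Bessel bound `B` is norm bounded: for μ-almost every `x ∈ X` one
has `‖F x‖ ≤ √(B / η)`. -/
theorem stmt_0 {𝕜 X H : Type*} [RCLike 𝕜] [MeasurableSpace X]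
    [NormedAddCommGroup H] [InnerProductSpace 𝕜 H] [CompleteSpace H]
    [TopologicalSpace.SeparableSpace H]
    (μ : Measure X) [SigmaFinite μ]
    (F : X → H) (B : ℝ) (hB : 0 < B)
    (hmeas : ∀ f : H, Measurable fun x => (inner 𝕜 f (F x) : 𝕜))
    (hBessel : ∀ f : H,
      ∫⁻ x, (‖(inner 𝕜 f (F x) : 𝕜)‖₊ : ℝ≥0∞) ^ 2 ∂μ ≤ ENNReal.ofReal (B * ‖f‖ ^ 2))
    (η : ℝ≥0∞)
    (hη : η = sInf {m : ℝ≥0∞ | ∃ E : Set X, MeasurableSet E ∧ μ E = m ∧ 0 < m ∧ m < ⊤})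
    (hηpos : 0 < η) :
    ∀ᵐ x ∂μ, ‖F x‖ ≤ Real.sqrt (B / η.toReal) :=
  stmt_0_general μ F B hB hmeas hBessel η hη hηpos
end

section
/- Let (X, μ) be a measure space with η = inf{μ(E) : E measurable, 0 < μ(E) < ∞} = 0. Then there exists a sequence of pairwise disjoint measurable sets F₁, F₂, … ⊆ X such that μ(Fₙ) > 0 for every n and lim_{n→∞} μ(Fₙ) = 0. -/
open MeasureTheory ENNReal Filter

/-- Let `(X, μ)` be a measure space with
`η = inf {μ E : E measurable, 0 < μ E < ∞} = 0`. Then there exists a sequence of pairwise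
disjoint measurable sets `F₁, F₂, … ⊆ X` such that `μ (F n) > 0` for every `n` and
`μ (F n) → 0` as `n → ∞`. -/
theorem stmt_1 {X : Type*} [MeasurableSpace X] (μ : Measure X)
    (hη : sInf {m : ℝ≥0∞ | ∃ E : Set X, MeasurableSet E ∧ μ E = m ∧ 0 < m ∧ m < ⊤} = 0) :
    ∃ F : ℕ → Set X, (∀ n, MeasurableSet (F n)) ∧
      Pairwise (Function.onFun Disjoint F) ∧
      (∀ n, 0 < μ (F n)) ∧
      Tendsto (fun n => μ (F n)) atTop (nhds 0) := by
  have key : ∀ ε : ℝ≥0∞, 0 < ε →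
      ∃ E : Set X, MeasurableSet E ∧ 0 < μ E ∧ μ E < ⊤ ∧ μ E < ε := by
    intro ε hε
    have h : sInf {m : ℝ≥0∞ | ∃ E : Set X, MeasurableSet E ∧ μ E = m ∧ 0 < m ∧ m < ⊤} < ε := by
      rw [hη]; exact hε
    obtain ⟨m, ⟨E, hE, hEm, hm0, hmT⟩, hmε⟩ := sInf_lt_iff.mp h
    exact ⟨E, hE, hEm ▸ hm0, hEm ▸ hmT, hEm ▸ hmε⟩
  choose f hmeas hpos hfin hlt using key
  set g : ℕ → Set X := fun n => Nat.rec (f 1 one_pos)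
    (fun _ prev => if h : 0 < μ prev then
      f (μ prev / 2) (ENNReal.div_pos h.ne' ENNReal.ofNat_ne_top) else ∅) n with hgdef
  have hP : ∀ n, MeasurableSet (g n) ∧ 0 < μ (g n) ∧ μ (g n) < ⊤ := by
    intro n
    induction n with
    | zero => exact ⟨hmeas 1 one_pos, hpos 1 one_pos, hfin 1 one_pos⟩
    | succ n ih =>
      have h : g (n + 1) = f (μ (g n) / 2)
          (ENNReal.div_pos ih.2.1.ne' ENNReal.ofNat_ne_top) := by
        show (if h : 0 < μ (g n) then _ else ∅) = _
        rw [dif_pos ih.2.1]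
      rw [h]
      exact ⟨hmeas _ _, hpos _ _, hfin _ _⟩
  have hstep : ∀ n, μ (g (n + 1)) < μ (g n) / 2 := by
    intro n
    have h : g (n + 1) = f (μ (g n) / 2)
        (ENNReal.div_pos (hP n).2.1.ne' ENNReal.ofNat_ne_top) := by
      show (if h : 0 < μ (g n) then _ else ∅) = _
      rw [dif_pos (hP n).2.1]
    rw [h]; exact hlt _ _
  have hle : ∀ n k, μ (g (n + k)) ≤ μ (g n) * 2⁻¹ ^ k := by
    intro n k
    induction k with
    | zero => simp
    | succ k ih =>
      have h1 : μ (g (n + k + 1)) ≤ μ (g (n + k)) * 2⁻¹ := by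
        have := (hstep (n + k)).le
        rwa [ENNReal.div_eq_inv_mul, mul_comm] at this
      calc μ (g (n + (k + 1))) = μ (g (n + k + 1)) := by ring_nf
        _ ≤ μ (g (n + k)) * 2⁻¹ := h1
        _ ≤ μ (g n) * 2⁻¹ ^ k * 2⁻¹ := by
            exact mul_le_mul_left ih _
        _ = μ (g n) * 2⁻¹ ^ (k + 1) := by ring
  -- the tail union
  set U : ℕ → Set X := fun n => ⋃ j : ℕ, g (n + 1 + j) with hUdef
  have hUmeas : ∀ n, MeasurableSet (U n) := fun n =>
    MeasurableSet.iUnion fun j => (hP _).1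
  have hUlt : ∀ n, μ (U n) < μ (g n) := by
    intro n
    have h1 : μ (U n) ≤ ∑' j : ℕ, μ (g (n + 1 + j)) := measure_iUnion_le _
    have h2 : ∑' j : ℕ, μ (g (n + 1 + j)) ≤ μ (g (n + 1)) * 2 := by
      calc ∑' j : ℕ, μ (g (n + 1 + j)) ≤ ∑' j : ℕ, μ (g (n + 1)) * 2⁻¹ ^ j :=
            ENNReal.tsum_le_tsum fun j => hle (n + 1) j
        _ = μ (g (n + 1)) * ∑' j : ℕ, 2⁻¹ ^ j := ENNReal.tsum_mul_left
        _ = μ (g (n + 1)) * 2 := by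
            rw [ENNReal.tsum_geometric, ENNReal.one_sub_inv_two, inv_inv]
    have h3 : μ (g (n + 1)) * 2 < μ (g n) := by
      have := hstep n
      calc μ (g (n + 1)) * 2 < (μ (g n) / 2) * 2 := by
            exact ENNReal.mul_lt_mul_left two_ne_zero ENNReal.ofNat_ne_top this
        _ = μ (g n) := ENNReal.div_mul_cancel two_ne_zero ENNReal.ofNat_ne_top
    exact lt_of_le_of_lt (le_trans h1 h2) h3
  refine ⟨fun n => g n \ U n, fun n => (hP n).1.diff (hUmeas n), ?_, ?_, ?_⟩
  · -- pairwise disjoint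
    have main : ∀ m n : ℕ, m < n → Disjoint (g m \ U m) (g n \ U n) := by
      intro m n hmn
      apply Set.disjoint_left.mpr
      intro x hx hx'
      apply hx.2
      have hsub : g n ⊆ U m := by
        have : n = m + 1 + (n - m - 1) := by omega
        rw [this]
        exact Set.subset_iUnion (fun j => g (m + 1 + j)) (n - m - 1)
      exact hsub hx'.1
    intro m n hmn
    rcases lt_or_gt_of_ne hmn with h | h
    · exact main m n h
    · exact (main n m h).symm
  · -- positivity
    intro n
    by_contra h0
    push_neg at h0
    have h0' : μ (g n \ U n) = 0 := le_antisymm h0 zero_le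
    have : μ (g n) ≤ μ (g n \ U n) + μ (U n) := by
      calc μ (g n) ≤ μ ((g n \ U n) ∪ U n) := measure_mono (by
            intro x hx
            by_cases hxU : x ∈ U n
            · exact Or.inr hxU
            · exact Or.inl ⟨hx, hxU⟩)
        _ ≤ μ (g n \ U n) + μ (U n) := measure_union_le _ _
    rw [h0', zero_add] at this
    exact absurd (hUlt n) (not_lt.mpr this)
  · -- tendsto
    have hbd : ∀ n, μ (g n \ U n) ≤ μ (g 0) * 2⁻¹ ^ n := fun n =>
      le_trans (measure_mono Set.diff_subset) (by simpa using hle 0 n)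
    have hgeo : Tendsto (fun n : ℕ => μ (g 0) * 2⁻¹ ^ n) atTop (nhds 0) := by
      have h1 : Tendsto (fun n : ℕ => (2⁻¹ : ℝ≥0∞) ^ n) atTop (nhds 0) :=
        ENNReal.tendsto_pow_atTop_nhds_zero_of_lt_one
          (ENNReal.inv_lt_one.mpr one_lt_two)
      have := ENNReal.Tendsto.const_mul h1 (Or.inr (hP 0).2.2.ne)
      simpa using this
    exact tendsto_of_tendsto_of_tendsto_of_le_of_le tendsto_const_nhds hgeo
      (fun n => zero_le) hbd
end

section
/- Let (X, μ) be a measure space with η = inf{μ(E) : E measurable, 0 < μ(E) < ∞} > 0. Then every measurable set of positive finite measure is a finite union of pairwise disjoint atoms. -/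
open MeasureTheory ENNReal

/-- A measurable set `E` of positive measure is an atom of `μ` if for every measurable
`F ⊆ E`, either `μ F = 0` or `μ (E \ F) = 0`. -/
def IsAtomOf {X : Type*} [MeasurableSpace X] (μ : Measure X) (E : Set X) : Prop :=
  MeasurableSet E ∧ 0 < μ E ∧
    ∀ F : Set X, MeasurableSet F → F ⊆ E → μ F = 0 ∨ μ (E \ F) = 0

/-- Let `(X, μ)` be a measure space with
`η = inf {m : μ E = m, 0 < m < ∞} > 0`. Then every measurable set of positive
finite measure is a finite union of pairwise disjoint atoms. -/
theorem stmt_2 {X : Type*} [MeasurableSpace X] (μ : Measure X)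
    (hη : 0 < sInf {m : ℝ≥0∞ | ∃ E : Set X, MeasurableSet E ∧ μ E = m ∧ 0 < m ∧ m < ⊤}) :
    ∀ E : Set X, MeasurableSet E → 0 < μ E → μ E < ⊤ →
      ∃ (n : ℕ) (A : Fin n → Set X),
        (∀ i, IsAtomOf μ (A i)) ∧
        Pairwise (Function.onFun Disjoint A) ∧
        E = ⋃ i, A i := by
  set S := {m : ℝ≥0∞ | ∃ E : Set X, MeasurableSet E ∧ μ E = m ∧ 0 < m ∧ m < ⊤} with hS
  set η := sInf S with hηdef
  have key : ∀ n : ℕ, ∀ E : Set X, MeasurableSet E → 0 < μ E → μ E < ⊤ → μ E ≤ n * η →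
      ∃ (n : ℕ) (A : Fin n → Set X),
        (∀ i, IsAtomOf μ (A i)) ∧
        Pairwise (Function.onFun Disjoint A) ∧
        E = ⋃ i, A i := by
    intro n
    induction n using Nat.strong_induction_on with
    | _ n ih =>
      intro E hE hpos hfin hle
      by_cases hatom : ∀ F : Set X, MeasurableSet F → F ⊆ E → μ F = 0 ∨ μ (E \ F) = 0
      · refine ⟨1, fun _ => E, fun _ => ⟨hE, hpos, hatom⟩, Subsingleton.pairwise, (Set.iUnion_const E).symm⟩
      · push_neg at hatom
        obtain ⟨F, hF, hFE, hF0, hEF0⟩ := hatom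
        have hFfin : μ F < ⊤ := lt_of_le_of_lt (measure_mono hFE) hfin
        have hEFfin : μ (E \ F) < ⊤ := lt_of_le_of_lt (measure_mono Set.diff_subset) hfin
        have hηF : η ≤ μ F := sInf_le ⟨F, hF, rfl, pos_iff_ne_zero.mpr hF0, hFfin⟩
        have hηEF : η ≤ μ (E \ F) :=
          sInf_le ⟨E \ F, hE.diff hF, rfl, pos_iff_ne_zero.mpr hEF0, hEFfin⟩
        have hηfin : η < ⊤ := lt_of_le_of_lt hηF hFfin
        have hηne : η ≠ 0 := hη.ne'
        have hsum : μ F + μ (E \ F) = μ E := by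
          rw [measure_add_diff hF.nullMeasurableSet E, Set.union_eq_self_of_subset_left hFE]
        -- n ≥ 2
        have h2η : 2 * η ≤ (n : ℝ≥0∞) * η := by
          calc 2 * η = η + η := by ring
          _ ≤ μ F + μ (E \ F) := add_le_add hηF hηEF
          _ = μ E := hsum
          _ ≤ n * η := hle
        have hn2 : 2 ≤ n := by
          have := (ENNReal.mul_le_mul_iff_left hηne hηfin.ne).mp h2η
          exact_mod_cast (by exact_mod_cast this : ((2:ℕ) : ℝ≥0∞) ≤ (n : ℝ≥0∞))
        have hn1 : n - 1 < n := Nat.sub_lt (by omega) one_pos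
        have hcast : ((n - 1 : ℕ) : ℝ≥0∞) * η + η = (n : ℝ≥0∞) * η := by
          have : ((n - 1 : ℕ) : ℝ≥0∞) + 1 = (n : ℝ≥0∞) := by
            exact_mod_cast congrArg (Nat.cast : ℕ → ℝ≥0∞) (by omega : (n - 1) + 1 = n)
          calc ((n - 1 : ℕ) : ℝ≥0∞) * η + η = (((n - 1 : ℕ) : ℝ≥0∞) + 1) * η := by ring
          _ = (n : ℝ≥0∞) * η := by rw [this]
        have hFle : μ F ≤ ((n - 1 : ℕ) : ℝ≥0∞) * η := by
          have h1 : μ F + η ≤ ((n - 1 : ℕ) : ℝ≥0∞) * η + η := by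
            rw [hcast]
            calc μ F + η ≤ μ F + μ (E \ F) := add_le_add_right hηEF _
            _ = μ E := hsum
            _ ≤ n * η := hle
          exact (ENNReal.add_le_add_iff_right hηfin.ne).mp h1
        have hEFle : μ (E \ F) ≤ ((n - 1 : ℕ) : ℝ≥0∞) * η := by
          have h1 : μ (E \ F) + η ≤ ((n - 1 : ℕ) : ℝ≥0∞) * η + η := by
            rw [hcast]
            calc μ (E \ F) + η ≤ μ (E \ F) + μ F := add_le_add_right hηF _
            _ = μ E := by rw [add_comm]; exact hsum
            _ ≤ n * η := hle
          exact (ENNReal.add_le_add_iff_right hηfin.ne).mp h1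
        obtain ⟨a, A, hA, hAd, hAu⟩ :=
          ih (n - 1) hn1 F hF (pos_iff_ne_zero.mpr hF0) hFfin hFle
        obtain ⟨b, B, hB, hBd, hBu⟩ :=
          ih (n - 1) hn1 (E \ F) (hE.diff hF) (pos_iff_ne_zero.mpr hEF0) hEFfin hEFle
        refine ⟨a + b, Sum.elim A B ∘ finSumFinEquiv.symm, ?_, ?_, ?_⟩
        · intro i
          rcases h : finSumFinEquiv.symm i with x | y
          · simpa [h] using hA x
          · simpa [h] using hB y
        · intro i j hij
          have hne : finSumFinEquiv.symm i ≠ finSumFinEquiv.symm j := fun h =>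
            hij (finSumFinEquiv.symm.injective h)
          have hAF : ∀ x, A x ⊆ F := fun x => hAu ▸ Set.subset_iUnion A x
          have hBEF : ∀ y, B y ⊆ E \ F := fun y => hBu ▸ Set.subset_iUnion B y
          have hdisj : Disjoint F (E \ F) := Set.disjoint_sdiff_right
          simp only [Function.onFun, Function.comp_apply]
          rcases hi : finSumFinEquiv.symm i with x | y <;>
            rcases hj : finSumFinEquiv.symm j with x' | y'
          · simp only [Sum.elim_inl]
            exact hAd (fun h => hne (by rw [hi, hj, h]))
          · simp only [Sum.elim_inl, Sum.elim_inr]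
            exact hdisj.mono (hAF x) (hBEF y')
          · simp only [Sum.elim_inl, Sum.elim_inr]
            exact (hdisj.mono (hAF x') (hBEF y)).symm
          · simp only [Sum.elim_inr]
            exact hBd (fun h => hne (by rw [hi, hj, h]))
        · have : ⋃ i, (Sum.elim A B ∘ finSumFinEquiv.symm) i = ⋃ j, Sum.elim A B j :=
            finSumFinEquiv.symm.iSup_comp (g := fun j => Sum.elim A B j)
          rw [this, Set.iUnion_sum]
          simp only [Sum.elim_inl, Sum.elim_inr]
          rw [← hAu, ← hBu, Set.union_diff_cancel hFE]
  intro E hE hpos hfin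
  have hηle : η ≤ μ E := sInf_le ⟨E, hE, rfl, hpos, hfin⟩
  have hηfin : η ≠ ⊤ := (lt_of_le_of_lt hηle hfin).ne
  have hdiv : μ E / η ≠ ⊤ := (ENNReal.div_lt_top hfin.ne hη.ne').ne
  obtain ⟨n, hn⟩ := ENNReal.exists_nat_gt hdiv
  have : μ E ≤ n * η := by
    have h1 : μ E / η ≤ n := hn.le
    calc μ E = μ E / η * η := (ENNReal.div_mul_cancel hη.ne' hηfin).symm
    _ ≤ n * η := mul_le_mul_left h1 η
  exact key n E hE hpos hfin this
end

section
/- Let H be a separable real Hilbert space, (X, μ) a σ-finite positive measure space, and F : X → H a continuous frame. Then F does phase retrieval if and only if for any two non-zero vectors f, g ∈ H one has ∫_X |⟨f, F(x)⟩|² |⟨g, F(x)⟩|² dμ(x) > 0. -/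
open MeasureTheory ENNReal
open scoped NNReal RealInnerProductSpace

/-- `F : X → H` is a continuous frame with bounds `0 < A ≤ B` for a real Hilbert space. -/
def IsContinuousFrame {X H : Type*} [MeasurableSpace X]
    [NormedAddCommGroup H] [InnerProductSpace ℝ H]
    (μ : Measure X) (F : X → H) (A B : ℝ) : Prop :=
  0 < A ∧ A ≤ B ∧
  (∀ f : H, Measurable fun x => ⟪f, F x⟫) ∧
  ∀ f : H,
    ENNReal.ofReal (A * ‖f‖ ^ 2) ≤ ∫⁻ x, (‖⟪f, F x⟫‖₊ : ℝ≥0∞) ^ 2 ∂μ ∧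
    ∫⁻ x, (‖⟪f, F x⟫‖₊ : ℝ≥0∞) ^ 2 ∂μ ≤ ENNReal.ofReal (B * ‖f‖ ^ 2)

/-- `F` does phase retrieval if `|⟪f, F x⟫| = |⟪g, F x⟫|` μ-a.e. forces `f = c • g`
with `|c| = 1`. -/
def DoesPhaseRetrieval {X H : Type*} [MeasurableSpace X]
    [NormedAddCommGroup H] [InnerProductSpace ℝ H]
    (μ : Measure X) (F : X → H) : Prop :=
  ∀ f g : H, (∀ᵐ x ∂μ, |⟪f, F x⟫| = |⟪g, F x⟫|) →
    ∃ c : ℝ, |c| = 1 ∧ f = c • g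

/-- Let `H` be a separable real Hilbert space, `(X, μ)` a σ-finite positive
measure space, and `F : X → H` a continuous frame. Then `F` does phase retrieval if and
only if for any two non-zero vectors `f, g ∈ H` one has
`∫_X |⟪f, F x⟫|² |⟪g, F x⟫|² dμ(x) > 0`. -/
theorem stmt_6 {X H : Type*} [MeasurableSpace X]
    [NormedAddCommGroup H] [InnerProductSpace ℝ H] [CompleteSpace H]
    [TopologicalSpace.SeparableSpace H]
    (μ : Measure X) [SigmaFinite μ]
    (F : X → H) (A B : ℝ)
    (hF : IsContinuousFrame μ F A B) :
    DoesPhaseRetrieval μ F ↔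
      ∀ f g : H, f ≠ 0 → g ≠ 0 →
        0 < ∫⁻ x, (‖⟪f, F x⟫‖₊ : ℝ≥0∞) ^ 2 * (‖⟪g, F x⟫‖₊ : ℝ≥0∞) ^ 2 ∂μ := by
  obtain ⟨hA, hAB, hmeas, hbound⟩ := hF
  have hm : ∀ u : H, Measurable fun x => (‖⟪u, F x⟫‖₊ : ℝ≥0∞) ^ 2 :=
    fun u => ((hmeas u).nnnorm.coe_nnreal_ennreal).pow_const 2
  constructor
  · intro hPR f g hf hg
    rw [pos_iff_ne_zero]
    intro h0
    rw [lintegral_eq_zero_iff (show Measurable fun x => (‖⟪f, F x⟫‖₊ : ℝ≥0∞) ^ 2 * (‖⟪g, F x⟫‖₊ : ℝ≥0∞) ^ 2 from (hm f).mul (hm g))] at h0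
    have hae : ∀ᵐ x ∂μ, |⟪f + g, F x⟫| = |⟪f - g, F x⟫| := by
      filter_upwards [h0] with x hx
      rcases mul_eq_zero.mp hx with h | h
      · have h' : ⟪f, F x⟫ = 0 := by simpa using h
        simp [inner_add_left, inner_sub_left, h']
      · have h' : ⟪g, F x⟫ = 0 := by simpa using h
        simp [inner_add_left, inner_sub_left, h']
    obtain ⟨c, hc, heq⟩ := hPR (f + g) (f - g) hae
    rcases abs_eq (by norm_num : (0:ℝ) ≤ 1) |>.mp hc with rfl | rfl
    · rw [one_smul, sub_eq_add_neg] at heq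
      have hgg := eq_neg_iff_add_eq_zero.mp (add_left_cancel heq)
      have h2 : (2:ℝ) • g = 0 := by rw [two_smul]; exact hgg
      exact hg ((smul_eq_zero.mp h2).resolve_left (by norm_num))
    · rw [neg_smul, one_smul, neg_sub] at heq
      rw [sub_eq_add_neg, add_comm f g] at heq
      have hgg := eq_neg_iff_add_eq_zero.mp (add_left_cancel heq)
      have h2 : (2:ℝ) • f = 0 := by rw [two_smul]; exact hgg
      exact hf ((smul_eq_zero.mp h2).resolve_left (by norm_num))
  · intro hpos f g hae
    have hprod : ∀ᵐ x ∂μ, ⟪f + g, F x⟫ * ⟪f - g, F x⟫ = 0 := by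
      filter_upwards [hae] with x hx
      have h2 : ⟪f, F x⟫ ^ 2 = ⟪g, F x⟫ ^ 2 := by
        rw [← sq_abs, hx, sq_abs]
      rw [inner_add_left, inner_sub_left]
      linear_combination h2
    have h0 : ∫⁻ x, (‖⟪f + g, F x⟫‖₊ : ℝ≥0∞) ^ 2 * (‖⟪f - g, F x⟫‖₊ : ℝ≥0∞) ^ 2 ∂μ = 0 := by
      rw [lintegral_eq_zero_iff (show Measurable fun x => (‖⟪f + g, F x⟫‖₊ : ℝ≥0∞) ^ 2 * (‖⟪f - g, F x⟫‖₊ : ℝ≥0∞) ^ 2 from (hm (f + g)).mul (hm (f - g)))]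
      filter_upwards [hprod] with x hx
      rcases mul_eq_zero.mp hx with h | h <;> simp [h]
    have hcase : f + g = 0 ∨ f - g = 0 := by
      by_contra hc
      push_neg at hc
      exact absurd h0 (hpos _ _ hc.1 hc.2).ne'
    rcases hcase with h | h
    · exact ⟨-1, by norm_num, by rw [neg_one_smul]; exact eq_neg_of_add_eq_zero_left h⟩
    · exact ⟨1, by norm_num, by rw [one_smul]; exact sub_eq_zero.mp h⟩
end

section
/- Let H be a separable real Hilbert space, (X, μ) a σ-finite positive measure space, and F : X → H a continuous frame. Then F does norm retrieval if and only if for every measurable subset Ω ⊆ X the following holds: whenever f, g ∈ H satisfy ⟨f, F(x)⟩ = 0 for μ-almost every x ∈ Ω and ⟨g, F(x)⟩ = 0 for μ-almost every x ∈ X \ Ω, then ⟨f, g⟩ = 0 (i.e., the orthogonal complements of the spans of {F(x) : x ∈ Ω} and {F(x) : x ∈ X \ Ω} are orthogonal to each other). -/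
open MeasureTheory ENNReal
open scoped NNReal RealInnerProductSpace

/-- `F` does norm retrieval if `|⟪f, F x⟫| = |⟪g, F x⟫|` μ-a.e. forces `‖f‖ = ‖g‖`. -/
def DoesNormRetrieval {X H : Type*} [MeasurableSpace X]
    [NormedAddCommGroup H] [InnerProductSpace ℝ H]
    (μ : Measure X) (F : X → H) : Prop :=
  ∀ f g : H, (∀ᵐ x ∂μ, |⟪f, F x⟫| = |⟪g, F x⟫|) → ‖f‖ = ‖g‖

/-- Let `H` be a separable real Hilbert space, `(X, μ)` a σ-finite positive
measure space, and `F : X → H` a continuous frame. Then `F` does norm retrieval if and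
only if for every measurable `Ω ⊆ X`: whenever `f, g ∈ H` satisfy `⟪f, F x⟫ = 0` for
μ-a.e. `x ∈ Ω` and `⟪g, F x⟫ = 0` for μ-a.e. `x ∈ X \ Ω`, then `⟪f, g⟫ = 0`; that is,
the orthogonal complements of the spans of `{F x : x ∈ Ω}` and `{F x : x ∈ X \ Ω}` are
orthogonal to each other. -/
theorem stmt_12 {X H : Type*} [MeasurableSpace X]
    [NormedAddCommGroup H] [InnerProductSpace ℝ H] [CompleteSpace H]
    [TopologicalSpace.SeparableSpace H]
    (μ : Measure X) [SigmaFinite μ]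
    (F : X → H) (A B : ℝ)
    (hF : IsContinuousFrame μ F A B) :
    DoesNormRetrieval μ F ↔
      ∀ Ω : Set X, MeasurableSet Ω →
        ∀ f g : H,
          (∀ᵐ x ∂μ.restrict Ω, ⟪f, F x⟫ = 0) →
          (∀ᵐ x ∂μ.restrict Ωᶜ, ⟪g, F x⟫ = 0) →
          ⟪f, g⟫ = 0 := by
  obtain ⟨hA, hAB, hmeas, hframe⟩ := hF
  constructor
  · intro hNR Ω hΩ f g hf hg
    have h1 : ∀ᵐ x ∂μ, x ∈ Ω → ⟪f, F x⟫ = 0 := (ae_restrict_iff' hΩ).mp hf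
    have h2 : ∀ᵐ x ∂μ, x ∈ Ωᶜ → ⟪g, F x⟫ = 0 := (ae_restrict_iff' hΩ.compl).mp hg
    have key : ‖f + g‖ = ‖f - g‖ := by
      apply hNR
      filter_upwards [h1, h2] with x h1 h2
      by_cases hx : x ∈ Ω
      · rw [inner_add_left, inner_sub_left, h1 hx]
        simp
      · rw [inner_add_left, inner_sub_left, h2 hx]
        simp
    have h3 : ‖f + g‖ ^ 2 = ‖f - g‖ ^ 2 := by rw [key]
    rw [norm_add_sq_real, norm_sub_sq_real] at h3
    linarith
  · intro hcond f g hfg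
    set Ω : Set X := (fun x => ⟪f - g, F x⟫) ⁻¹' {0} with hΩdef
    have hΩ : MeasurableSet Ω := hmeas (f - g) (measurableSet_singleton 0)
    have h1 : ∀ᵐ x ∂μ.restrict Ω, ⟪f - g, F x⟫ = 0 := by
      rw [ae_restrict_iff' hΩ]
      filter_upwards with x hx
      exact hx
    have h2 : ∀ᵐ x ∂μ.restrict Ωᶜ, ⟪f + g, F x⟫ = 0 := by
      rw [ae_restrict_iff' hΩ.compl]
      filter_upwards [hfg] with x hx hxc
      have hne : ⟪f, F x⟫ ≠ ⟪g, F x⟫ := by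
        intro h
        exact hxc (by simp [hΩdef, inner_sub_left, h])
      rcases abs_eq_abs.mp hx with h | h
      · exact absurd h hne
      · rw [inner_add_left]; linarith
    have h4 := hcond Ω hΩ (f - g) (f + g) h1 h2
    have h5 : ‖f‖ ^ 2 = ‖g‖ ^ 2 := by
      simp only [inner_sub_left, inner_add_right] at h4
      rw [← real_inner_self_eq_norm_sq, ← real_inner_self_eq_norm_sq]
      have := real_inner_comm f g
      linarith
    nlinarith [norm_nonneg f, norm_nonneg g]
end

section
/- Let H be a separable real Hilbert space and (X, μ) a σ-finite positive measure space. Suppose F : X → H is a continuous frame with bounds A, B that does norm retrieval but does not do phase retrieval. Then for every ε with 0 < ε < 2√A there exists a continuous frame F′ : X → H such that ∫_X |⟨h, F(x) − F′(x)⟩|² dμ(x) ≤ (ε²/4)‖h‖² for all h ∈ H, and F′ does not do norm retrieval. -/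
open MeasureTheory ENNReal
open scoped NNReal RealInnerProductSpace

set_option maxHeartbeats 2000000 in
/-- Let `H` be a separable real Hilbert space and `(X, μ)` a σ-finite
positive measure space. Suppose `F : X → H` is a continuous frame with bounds `A, B`
that does norm retrieval but does not do phase retrieval. Then for every `ε` with
`0 < ε < 2√A` there exists a continuous frame `F' : X → H` such that
`∫_X |⟪h, F x − F' x⟫|² dμ(x) ≤ (ε²/4)‖h‖²` for all `h ∈ H`, and `F'` does not do
norm retrieval. -/
theorem stmt_13 {X H : Type*} [MeasurableSpace X]
    [NormedAddCommGroup H] [InnerProductSpace ℝ H] [CompleteSpace H]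
    [TopologicalSpace.SeparableSpace H]
    (μ : Measure X) [SigmaFinite μ]
    (F : X → H) (A B : ℝ)
    (hF : IsContinuousFrame μ F A B)
    (hFnr : DoesNormRetrieval μ F)
    (hFnpr : ¬ DoesPhaseRetrieval μ F)
    (ε : ℝ) (hε : 0 < ε) (hε' : ε < 2 * Real.sqrt A) :
    ∃ F' : X → H,
      (∃ A' B' : ℝ, IsContinuousFrame μ F' A' B') ∧
      (∀ h : H,
        ∫⁻ x, (‖⟪h, F x - F' x⟫‖₊ : ℝ≥0∞) ^ 2 ∂μ ≤
          ENNReal.ofReal (ε ^ 2 / 4 * ‖h‖ ^ 2)) ∧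
      ¬ DoesNormRetrieval μ F' := by
  obtain ⟨hA, hAB, hMeas, hBounds⟩ := hF
  rw [DoesPhaseRetrieval] at hFnpr
  push_neg at hFnpr
  obtain ⟨f, g, hae, hnc⟩ := hFnpr
  have hfg : ‖f‖ = ‖g‖ := hFnr f g hae
  set u : H := f - g with hu_def
  set v : H := f + g with hv_def
  have hu : u ≠ 0 := by
    intro h
    exact hnc 1 (by norm_num) (by rw [one_smul]; exact sub_eq_zero.mp h)
  have hv : v ≠ 0 := by
    intro h
    refine hnc (-1) (by norm_num) ?_
    have : f = -g := by
      have := h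
      rw [hv_def, add_eq_zero_iff_eq_neg] at this
      exact this
    simpa using this
  have huv : ⟪u, v⟫ = 0 := by
    have h1 : ⟪u, v⟫ = ‖f‖ ^ 2 - ‖g‖ ^ 2 := by
      rw [hu_def, hv_def, inner_sub_left, inner_add_right, inner_add_right,
        real_inner_comm g f, real_inner_self_eq_norm_sq, real_inner_self_eq_norm_sq]
      ring
    rw [h1, hfg]; ring
  have haeuv : ∀ᵐ x ∂μ, ⟪u, F x⟫ * ⟪v, F x⟫ = 0 := by
    filter_upwards [hae] with x hx
    have h2 : ⟪u, F x⟫ * ⟪v, F x⟫ = ⟪f, F x⟫ ^ 2 - ⟪g, F x⟫ ^ 2 := by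
      rw [hu_def, hv_def, inner_sub_left, inner_add_left]; ring
    have h3 : ⟪f, F x⟫ ^ 2 = ⟪g, F x⟫ ^ 2 := by
      rw [← sq_abs ⟪f, F x⟫, ← sq_abs ⟪g, F x⟫, hx]
    rw [h2, h3]; ring
  have hB : 0 < B := lt_of_lt_of_le hA hAB
  have hsB : 0 < Real.sqrt B := Real.sqrt_pos.mpr hB
  have hnv : 0 < ‖v‖ := norm_pos_iff.mpr hv
  have hnu : 0 < ‖u‖ := norm_pos_iff.mpr hu
  set c : ℝ := ε / (2 * Real.sqrt B * ‖v‖) with hc_def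
  have hc0 : 0 < c := div_pos hε (by positivity)
  set t : ℝ := c * ‖v‖ with ht_def
  have ht0 : 0 < t := mul_pos hc0 hnv
  have ht : t = ε / (2 * Real.sqrt B) := by
    rw [ht_def, hc_def]; field_simp
  have ht1 : t < 1 := by
    rw [ht, div_lt_one (by positivity)]
    calc ε < 2 * Real.sqrt A := hε'
      _ ≤ 2 * Real.sqrt B := by
          have := Real.sqrt_le_sqrt hAB
          linarith
  set e : H := ‖u‖⁻¹ • u with he_def
  have hne : ‖e‖ = 1 := by
    rw [he_def, norm_smul, norm_inv, norm_norm, inv_mul_cancel₀ hnu.ne']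
  have hue : ⟪u, e⟫ = ‖u‖ := by
    rw [he_def, real_inner_smul_right, real_inner_self_eq_norm_sq]
    field_simp
  have hve : ⟪v, e⟫ = 0 := by
    rw [he_def, real_inner_smul_right, real_inner_comm, huv, mul_zero]
  set F' : X → H := fun x => F x + (c * ⟪v, F x⟫) • e with hF'_def
  set W : H → H := fun h => h + (c * ⟪h, e⟫) • v with hW_def
  clear_value W F' e t c
  have key : ∀ (h : H) (x : X), ⟪h, F' x⟫ = ⟪W h, F x⟫ := by
    intro h x
    rw [hF'_def, hW_def]
    simp only [inner_add_right, inner_add_left, real_inner_smul_right,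
      real_inner_smul_left]
    ring
  have hCS : ∀ h : H, |⟪h, e⟫| ≤ ‖h‖ := by
    intro h
    calc |⟪h, e⟫| ≤ ‖h‖ * ‖e‖ := abs_real_inner_le_norm h e
      _ = ‖h‖ := by rw [hne, mul_one]
  have hWub : ∀ h : H, ‖W h‖ ≤ (1 + t) * ‖h‖ := by
    intro h
    calc ‖W h‖ = ‖h + (c * ⟪h, e⟫) • v‖ := by rw [hW_def]
      _ ≤ ‖h‖ + ‖(c * ⟪h, e⟫) • v‖ := norm_add_le _ _
      _ = ‖h‖ + |c * ⟪h, e⟫| * ‖v‖ := by rw [norm_smul, Real.norm_eq_abs]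
      _ ≤ ‖h‖ + c * ‖h‖ * ‖v‖ := by
          have : |c * ⟪h, e⟫| ≤ c * ‖h‖ := by
            rw [abs_mul, abs_of_pos hc0]
            exact mul_le_mul_of_nonneg_left (hCS h) hc0.le
          nlinarith
      _ = (1 + t) * ‖h‖ := by rw [ht_def]; ring
  have hWlb : ∀ h : H, (1 - t) * ‖h‖ ≤ ‖W h‖ := by
    intro h
    have h1 : ‖h‖ - ‖(c * ⟪h, e⟫) • v‖ ≤ ‖W h‖ := by
      have h4 : ‖W h‖ = ‖h + (c * ⟪h, e⟫) • v‖ := by rw [hW_def]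
      rw [h4]
      have := norm_sub_norm_le h (-((c * ⟪h, e⟫) • v))
      simp only [sub_neg_eq_add, norm_neg] at this
      exact this
    have h2 : ‖(c * ⟪h, e⟫) • v‖ ≤ t * ‖h‖ := by
      rw [norm_smul, Real.norm_eq_abs, abs_mul, abs_of_pos hc0, ht_def]
      have := hCS h
      nlinarith
    linarith
  -- measurability for F'
  have hMeas' : ∀ h : H, Measurable fun x => ⟪h, F' x⟫ := by
    intro h
    have : (fun x => ⟪h, F' x⟫) = fun x => ⟪W h, F x⟫ := funext (key h)
    rw [this]; exact hMeas _
  -- integrals for F'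
  have hint : ∀ h : H, ∫⁻ x, (‖⟪h, F' x⟫‖₊ : ℝ≥0∞) ^ 2 ∂μ
      = ∫⁻ x, (‖⟪W h, F x⟫‖₊ : ℝ≥0∞) ^ 2 ∂μ := by
    intro h
    apply lintegral_congr
    intro x
    rw [key h x]
  have ht1' : 0 < 1 - t := by linarith
  refine ⟨F', ⟨A * (1 - t) ^ 2, B * (1 + t) ^ 2, ?_, ?_, hMeas', ?_⟩, ?_, ?_⟩
  · positivity
  · nlinarith
  · intro h
    constructor
    · calc ENNReal.ofReal (A * (1 - t) ^ 2 * ‖h‖ ^ 2)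
          ≤ ENNReal.ofReal (A * ‖W h‖ ^ 2) := by
            apply ENNReal.ofReal_le_ofReal
            have h1 : (1 - t) * ‖h‖ ≤ ‖W h‖ := hWlb h
            have h2 : 0 ≤ (1 - t) * ‖h‖ := by positivity
            have h3 := mul_self_le_mul_self h2 h1
            nlinarith
        _ ≤ ∫⁻ x, (‖⟪W h, F x⟫‖₊ : ℝ≥0∞) ^ 2 ∂μ := (hBounds (W h)).1
        _ = ∫⁻ x, (‖⟪h, F' x⟫‖₊ : ℝ≥0∞) ^ 2 ∂μ := (hint h).symm
    · calc ∫⁻ x, (‖⟪h, F' x⟫‖₊ : ℝ≥0∞) ^ 2 ∂μ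
          = ∫⁻ x, (‖⟪W h, F x⟫‖₊ : ℝ≥0∞) ^ 2 ∂μ := hint h
        _ ≤ ENNReal.ofReal (B * ‖W h‖ ^ 2) := (hBounds (W h)).2
        _ ≤ ENNReal.ofReal (B * (1 + t) ^ 2 * ‖h‖ ^ 2) := by
            apply ENNReal.ofReal_le_ofReal
            have h1 : ‖W h‖ ≤ (1 + t) * ‖h‖ := hWub h
            have h3 := mul_self_le_mul_self (norm_nonneg (W h)) h1
            nlinarith
  -- perturbation bound
  · intro h
    have hsub : ∀ x, ⟪h, F x - F' x⟫ = (-(c * ⟪h, e⟫)) * ⟪v, F x⟫ := by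
      intro x
      rw [hF'_def]
      simp only [inner_sub_right, inner_add_right, real_inner_smul_right,
        real_inner_comm e h]
      ring
    have hcB : (c * |⟪h, e⟫|) ^ 2 * (B * ‖v‖ ^ 2) ≤ ε ^ 2 / 4 * ‖h‖ ^ 2 := by
      have hsq : Real.sqrt B ^ 2 = B := Real.sq_sqrt hB.le
      have hc2 : c ^ 2 * (B * ‖v‖ ^ 2) = ε ^ 2 / 4 := by
        rw [hc_def]; field_simp
        linear_combination (-4) * hsq
      have := hCS h
      have habs : (c * |⟪h, e⟫|) ^ 2 ≤ c ^ 2 * ‖h‖ ^ 2 := by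
        have h0 : |⟪h, e⟫| ^ 2 ≤ ‖h‖ ^ 2 := by nlinarith [abs_nonneg ⟪h, e⟫]
        nlinarith [sq_nonneg c]
      have hBv : (0:ℝ) ≤ B * ‖v‖ ^ 2 := by positivity
      calc (c * |⟪h, e⟫|) ^ 2 * (B * ‖v‖ ^ 2)
          ≤ c ^ 2 * ‖h‖ ^ 2 * (B * ‖v‖ ^ 2) := mul_le_mul_of_nonneg_right habs hBv
        _ = ε ^ 2 / 4 * ‖h‖ ^ 2 := by linear_combination ‖h‖ ^ 2 * hc2
    calc ∫⁻ x, (‖⟪h, F x - F' x⟫‖₊ : ℝ≥0∞) ^ 2 ∂μ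
        = (‖c * ⟪h, e⟫‖₊ : ℝ≥0∞) ^ 2 * ∫⁻ x, (‖⟪v, F x⟫‖₊ : ℝ≥0∞) ^ 2 ∂μ := by
          rw [← lintegral_const_mul']
          · apply lintegral_congr
            intro x
            rw [hsub x]
            push_cast [nnnorm_mul, nnnorm_neg]
            ring
          · exact ENNReal.pow_ne_top ENNReal.coe_ne_top
      _ ≤ (‖c * ⟪h, e⟫‖₊ : ℝ≥0∞) ^ 2 * ENNReal.ofReal (B * ‖v‖ ^ 2) :=
          mul_le_mul_right (hBounds v).2 _
      _ ≤ ENNReal.ofReal (ε ^ 2 / 4 * ‖h‖ ^ 2) := by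
          have h1 : (‖c * ⟪h, e⟫‖₊ : ℝ≥0∞) = ENNReal.ofReal (c * |⟪h, e⟫|) := by
            rw [← enorm_eq_nnnorm, ← ofReal_norm, Real.norm_eq_abs, abs_mul,
              abs_of_pos hc0]
          rw [h1, ← ENNReal.ofReal_pow (by positivity), ← ENNReal.ofReal_mul (by positivity)]
          exact ENNReal.ofReal_le_ofReal hcB
  -- F' does not do norm retrieval
  · intro hNR
    set p : H := u - (2 * c * ‖u‖) • v with hp_def
    clear_value p
    have hpe : ⟪p, e⟫ = ‖u‖ := by
      rw [hp_def, inner_sub_left, real_inner_smul_left, hue, hve]; ring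
    have hWp : W p = u - (c * ‖u‖) • v := by
      simp only [hW_def, hpe]
      rw [hp_def]
      module
    have hWq : W u = u + (c * ‖u‖) • v := by
      simp only [hW_def, hue]
    have haepq : ∀ᵐ x ∂μ, |⟪p, F' x⟫| = |⟪u, F' x⟫| := by
      filter_upwards [haeuv] with x hx
      rw [key p x, key u x, hWp, hWq, inner_sub_left, inner_add_left,
        real_inner_smul_left]
      rcases mul_eq_zero.mp hx with h0 | h0
      · rw [h0]; simp [abs_neg]
      · rw [h0]; simp
    have hnorm := hNR p u haepq
    have hpu : ⟪u, (2 * c * ‖u‖) • v⟫ = 0 := by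
      rw [real_inner_smul_right, huv, mul_zero]
    have hps : ‖p‖ ^ 2 = ‖u‖ ^ 2 + (2 * c * ‖u‖) ^ 2 * ‖v‖ ^ 2 := by
      rw [hp_def, norm_sub_sq_real, hpu, norm_smul, Real.norm_eq_abs]
      rw [mul_pow, sq_abs]
      ring
    have : (2 * c * ‖u‖) ^ 2 * ‖v‖ ^ 2 > 0 := by positivity
    nlinarith [norm_nonneg p, norm_nonneg u]
end
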